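/- In the random matrix product setup, assume E|ε₀| < ∞ and that condition (δ*) holds for some κ ∈ (0,1). For t ∈ ℤ and n ≥ 0 define B_n = ‖ D̃_t D̃_{t−1} ⋯ D̃_{t−n} ‖₁, J_k = 1{ min_{l=1,…,d} |ε_{t−k−l}| ≤ K₂ }, I_n = 1{ Σ_{k=0}^n J_k > κ n }, and B_{n,2} = (1 − I_n) · B_n. Then there exist constants C < ∞ and γ ∈ (0,1) such that E[ B_{n,2} ] ≤ C γ^n for all n ≥ 0. -/

import Mathlib

/-!
On the event `I_n = 0` at most `κ n` indices `k ≤ n` are "good" (`J_k = 1`). Every bad index `k`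
forces `Δ_{t-k-i} = δ` for `i < d`, so it starts a run of `d` consecutive factors
`(1 + |ε|) B(δ)`. Writing `B(δ) = δ F + N` with `N` the nilpotent shift (`N^d = 0`) gives
`‖B(δ)^d‖₁ = ‖(δ F + N)^d - N^d‖₁ ≤ (1 + δ)^d - 1 ≤ C_d δ`, while `‖B(z)‖₁ ≤ Δ + 1` always.
Splitting the product greedily into single good factors and bad runs bounds `B_{n,2}` by
`∏_{k ≤ n} (1 + |ε_{t-k}|) · (Δ + 1)^{κ n + d - 1} (C_d δ)^{((1 - κ) n + 2 - d) / d}`.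
By independence the scalar product has mean `(1 + E|ε₀|)^{n+1}`, and condition (δ*) says
exactly that `γ = (1 + E|ε₀|) (Δ + 1)^κ (C_d δ)^{(1-κ)/d} < 1`.
-/

open MeasureTheory ProbabilityTheory Finset
noncomputable section

/-- The `d × d` matrix `B(z)`: first row all `z`, subdiagonal entries `(i+1,i)` equal `1`,
all other entries `0`. -/
def companionMat (d : ℕ) (z : ℝ) : Matrix (Fin d) (Fin d) ℝ :=
  fun i j => if (i : ℕ) = 0 then z else if (i : ℕ) = (j : ℕ) + 1 then 1 else 0

open scoped Classical in
/-- The random matrix `D̃_t = (1 + |ε_t|) B(Δ_t)`. -/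
def Dmat {Ω : Type*} (d : ℕ) (Δ δ K₂ : ℝ) (ε : ℤ → Ω → ℝ) (t : ℤ) (ω : Ω) :
    Matrix (Fin d) (Fin d) ℝ :=
  (1 + |ε t ω|) •
    companionMat d (if ∀ l : Fin d, |ε (t - 1 - (l : ℤ)) ω| ≤ K₂ then Δ else δ)

/-- The ordered product `D̃_t D̃_{t−1} ⋯ D̃_{t−n}`. -/
def DmatProd {Ω : Type*} (d : ℕ) (Δ δ K₂ : ℝ) (ε : ℤ → Ω → ℝ) (t : ℤ) (n : ℕ) (ω : Ω) :
    Matrix (Fin d) (Fin d) ℝ :=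
  ((List.range (n + 1)).map (fun k => Dmat d Δ δ K₂ ε (t - k) ω)).prod

/-- The maximum absolute column sum norm `‖A‖₁ = max_k Σ_j |a_{jk}|`. -/
def colSumNorm {d : ℕ} (A : Matrix (Fin d) (Fin d) ℝ) : ℝ :=
  ⨆ k : Fin d, ∑ j : Fin d, |A j k|

section WindowProd

variable {M : Type*} [Monoid M]

def windowProd (f : ℕ → M) (j m : ℕ) : M :=
  ((List.range m).map fun i => f (j + i)).prod

variable (f : ℕ → M)

theorem windowProd_add (j a b : ℕ) :
    windowProd f j (a + b) = windowProd f j a * windowProd f (j + a) b := by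
  simp [windowProd, List.range_add, Function.comp_def, add_assoc]

theorem windowProd_one (j : ℕ) : windowProd f j 1 = f j := by
  simp [windowProd]

theorem windowProd_eq_pow {x : M} {j m : ℕ} (h : ∀ i < m, f (j + i) = x) :
    windowProd f j m = x ^ m := by
  rw [windowProd, List.map_congr_left fun i hi => h i (List.mem_range.1 hi)]
  simp

theorem windowProd_smul {S : Type*} [CommMonoid S] [MulAction S M]
    [IsScalarTower S M M] [SMulCommClass S M M] (s : ℕ → S) (j m : ℕ) :
    windowProd (fun k => s k • f k) j m = (∏ i ∈ range m, s (j + i)) • windowProd f j m := by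
  induction m with
  | zero => simp [windowProd]
  | succ m ih =>
    rw [windowProd_add, windowProd_add f, ih, windowProd_one, windowProd_one, prod_range_succ,
      smul_mul_smul_comm]

theorem map_windowProd {N F : Type*} [Monoid N] [FunLike F M N]
    [MonoidHomClass F M N] (φ : F) (j m : ℕ) :
    φ (windowProd f j m) = windowProd (fun k => φ (f k)) j m := by
  simp [windowProd, map_list_prod, Function.comp_def]

end WindowProd

section NormedRing

variable {R : Type*} [SeminormedRing R] [NormOneClass R]

theorem norm_add_pow_sub_pow_le {a b : R} {α β : ℝ} (ha : ‖a‖ ≤ α) (hb : ‖b‖ ≤ β) (m : ℕ) :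
    ‖(a + b) ^ m - b ^ m‖ ≤ (α + β) ^ m - β ^ m := by
  induction m with
  | zero => simp
  | succ m ih =>
    have hβ : 0 ≤ β := (norm_nonneg b).trans hb
    have hab : ‖a + b‖ ≤ α + β := (norm_add_le a b).trans (add_le_add ha hb)
    have hbm : ‖b ^ m‖ ≤ β ^ m :=
      (norm_pow_le b m).trans (pow_le_pow_left₀ (norm_nonneg b) hb m)
    calc ‖(a + b) ^ (m + 1) - b ^ (m + 1)‖
        = ‖(a + b) * ((a + b) ^ m - b ^ m) + a * b ^ m‖ := by
          rw [pow_succ', pow_succ']; congr 1; noncomm_ring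
      _ ≤ ‖a + b‖ * ‖(a + b) ^ m - b ^ m‖ + ‖a‖ * ‖b ^ m‖ :=
        (norm_add_le _ _).trans (add_le_add (norm_mul_le _ _) (norm_mul_le _ _))
      _ ≤ (α + β) * ((α + β) ^ m - β ^ m) + α * β ^ m :=
        add_le_add (mul_le_mul hab ih (norm_nonneg _) ((norm_nonneg _).trans hab))
          (mul_le_mul ha hbm (norm_nonneg _) ((norm_nonneg _).trans ha))
      _ = (α + β) ^ (m + 1) - β ^ (m + 1) := by ring

theorem norm_windowProd_le {f : ℕ → R} {b : ℝ} (hf : ∀ k, ‖f k‖ ≤ b) (j m : ℕ) :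
    ‖windowProd f j m‖ ≤ b ^ m := by
  induction m with
  | zero => simp [windowProd]
  | succ m ih =>
    rw [windowProd_add, windowProd_one, pow_succ]
    exact (norm_mul_le _ _).trans
      (mul_le_mul ih (hf _) (norm_nonneg _) ((norm_nonneg _).trans ih))

/-- Greedy splitting of a product: an index in `J` is peeled off as one factor of norm `≤ b`, any
other index starts a block of `d` factors of norm `≤ c`, and fewer than `d` factors remain. -/
theorem norm_windowProd_le_of_blocks {d : ℕ} (hd : 0 < d) {b c : ℝ} (hb : 1 ≤ b) (hc : 0 ≤ c)
    {f : ℕ → R} (hf : ∀ k, ‖f k‖ ≤ b) {J : ℕ → Prop} [DecidablePred J]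
    (hblock : ∀ k, ¬ J k → ‖windowProd f k d‖ ≤ c) (m j : ℕ) :
    ∃ g h : ℕ, m ≤ g * d + h + (d - 1) ∧ h ≤ ∑ i ∈ range m, (if J (j + i) then 1 else 0) ∧
      ‖windowProd f j m‖ ≤ c ^ g * b ^ h * b ^ (d - 1) := by
  induction m using Nat.strong_induction_on generalizing j with
  | _ m ih =>
  by_cases hmd : m < d
  · refine ⟨0, 0, by omega, Nat.zero_le _, ?_⟩
    simpa using (norm_windowProd_le hf j m).trans (pow_le_pow_right₀ hb (by omega))
  by_cases hJ : J j
  · obtain ⟨m, rfl⟩ : ∃ m', m = 1 + m' := ⟨m - 1, by omega⟩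
    obtain ⟨g, h, hlen, hcount, hnorm⟩ := ih m (by omega) (j + 1)
    refine ⟨g, h + 1, by omega, ?_, ?_⟩
    · simp only [sum_range_add, range_one, sum_singleton, add_zero, if_pos hJ, ← add_assoc]
      omega
    · rw [windowProd_add, windowProd_one]
      calc ‖f j * windowProd f (j + 1) m‖ ≤ b * (c ^ g * b ^ h * b ^ (d - 1)) :=
            (norm_mul_le _ _).trans (mul_le_mul (hf j) hnorm (norm_nonneg _) (by linarith))
        _ = c ^ g * b ^ (h + 1) * b ^ (d - 1) := by ring
  · obtain ⟨m, rfl⟩ : ∃ m', m = d + m' := ⟨m - d, by omega⟩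
    obtain ⟨g, h, hlen, hcount, hnorm⟩ := ih m (by omega) (j + d)
    refine ⟨g + 1, h, by nlinarith, ?_, ?_⟩
    · simp only [sum_range_add, ← add_assoc]
      omega
    · rw [windowProd_add]
      calc ‖windowProd f j d * windowProd f (j + d) m‖ ≤ c * (c ^ g * b ^ h * b ^ (d - 1)) :=
            (norm_mul_le _ _).trans (mul_le_mul (hblock j hJ) hnorm (norm_nonneg _) hc)
        _ = c ^ (g + 1) * b ^ h * b ^ (d - 1) := by ring

end NormedRing

theorem add_one_pow_sub_one_le {x : ℝ} (hx0 : 0 ≤ x) (hx1 : x ≤ 1) (m : ℕ) :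
    (x + 1) ^ m - 1 ≤ (2 ^ m - 1) * x := by
  induction m with
  | zero => simp
  | succ m ih =>
    have h2m : (1 : ℝ) ≤ 2 ^ m := one_le_pow₀ one_le_two
    calc (x + 1) ^ (m + 1) - 1 = (x + 1) * ((x + 1) ^ m - 1) + x := by ring
      _ ≤ (x + 1) * ((2 ^ m - 1) * x) + x := by gcongr
      _ ≤ (2 ^ (m + 1) - 1) * x := by
        rw [pow_succ]; nlinarith [mul_nonneg (mul_nonneg (sub_nonneg.2 h2m) hx0) (sub_nonneg.2 hx1)]

theorem sum_range_sum_range_choose (d : ℕ) :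
    ∑ l ∈ range d, ∑ k ∈ range (l + 1), (l.choose k : ℝ) = 2 ^ d - 1 := by
  have hrow (l : ℕ) : ∑ k ∈ range (l + 1), (l.choose k : ℝ) = 2 ^ l := by
    exact_mod_cast Nat.sum_range_choose l
  simp only [hrow, geom_sum_eq (by norm_num : (2 : ℝ) ≠ 1)]
  norm_num

theorem pow_mul_pow_le_of_length {b c κ : ℝ} (hb : 1 ≤ b) (hc0 : 0 < c) (hc1 : c ≤ 1)
    {d n g h : ℕ} (hd : 0 < d) (hlen : n + 1 ≤ g * d + h + (d - 1)) (hh : (h : ℝ) ≤ κ * n) :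
    c ^ g * b ^ h ≤ c ^ ((2 - d : ℝ) / d) * (b ^ κ * c ^ ((1 - κ) / d)) ^ n := by
  have hd' : (0 : ℝ) < d := by exact_mod_cast hd
  have hlen' : (n : ℝ) + 2 ≤ g * d + h + d := by exact_mod_cast (by omega : n + 2 ≤ g * d + h + d)
  have hg : ((2 - d : ℝ) + (1 - κ) * n) / d ≤ g := by
    rw [div_le_iff₀ hd']; linarith
  calc c ^ g * b ^ h ≤ c ^ (((2 - d : ℝ) + (1 - κ) * n) / d) * b ^ (κ * n) := by
        rw [← Real.rpow_natCast c, ← Real.rpow_natCast b]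
        exact mul_le_mul (Real.rpow_le_rpow_of_exponent_ge hc0 hc1 hg)
          (Real.rpow_le_rpow_of_exponent_le hb hh) (by positivity) (by positivity)
    _ = c ^ ((2 - d : ℝ) / d) * (b ^ κ * c ^ ((1 - κ) / d)) ^ n := by
        rw [mul_pow, ← Real.rpow_natCast (b ^ κ), ← Real.rpow_natCast (c ^ _),
          ← Real.rpow_mul (by linarith), ← Real.rpow_mul hc0.le, add_div, Real.rpow_add hc0]
        ring_nf

theorem mul_mul_rpow_lt_one {A b c κ : ℝ} {d : ℕ} (hA : 0 < A) (hb : 0 < b) (hc : 0 < c)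
    (hκ : κ < 1) (hd : 0 < d)
    (h : c * (A ^ ((d : ℝ) / (1 - κ)) * b ^ (κ * d / (1 - κ))) < 1) :
    A * (b ^ κ * c ^ ((1 - κ) / d)) < 1 := by
  have hp : 0 < (d : ℝ) / (1 - κ) := div_pos (by exact_mod_cast hd) (by linarith)
  have hpow : (A * (b ^ κ * c ^ ((1 - κ) / d))) ^ ((d : ℝ) / (1 - κ))
      = c * (A ^ ((d : ℝ) / (1 - κ)) * b ^ (κ * d / (1 - κ))) := by
    rw [Real.mul_rpow hA.le (by positivity), Real.mul_rpow (by positivity) (by positivity),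
      ← Real.rpow_mul hb.le, ← Real.rpow_mul hc.le]
    have hd' : (d : ℝ) ≠ 0 := by positivity
    have hκ' : 1 - κ ≠ 0 := by linarith
    rw [show (1 - κ) / d * (d / (1 - κ)) = 1 by field_simp, Real.rpow_one,
      show κ * (d / (1 - κ)) = κ * d / (1 - κ) by ring]
    ring
  exact lt_of_not_ge fun hγ => (Real.one_le_rpow hγ hp.le).not_gt (hpow ▸ h)

theorem bounds_of_deltaStar {A Δ δ κ : ℝ} {d : ℕ} (hd : 0 < d) (hA : 1 ≤ A) (hδ : 0 < δ)
    (hδΔ : δ ≤ Δ) (hκ : κ ∈ Set.Ioo (0 : ℝ) 1)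
    (hδstar : δ < (A ^ ((d : ℝ) / (1 - κ)) * (Δ + 1) ^ (κ * d / (1 - κ))
        * (∑ l ∈ range d, ∑ k ∈ range (l + 1), (l.choose k : ℝ)))⁻¹) :
    (2 ^ d - 1) * δ ≤ 1 ∧
      A * ((Δ + 1) ^ κ * ((2 ^ d - 1) * δ) ^ ((1 - κ) / d)) ∈ Set.Ioo (0 : ℝ) 1 := by
  obtain ⟨hκ0, hκ1⟩ := hκ
  set X := A ^ ((d : ℝ) / (1 - κ)) * (Δ + 1) ^ (κ * d / (1 - κ))
  have h2d : (0 : ℝ) < 2 ^ d - 1 := sub_pos.2 (one_lt_pow₀ one_lt_two hd.ne')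
  have hX : 1 ≤ X := one_le_mul_of_one_le_of_one_le (Real.one_le_rpow hA (by bound))
    (Real.one_le_rpow (by linarith) (by bound))
  have hcX : (2 ^ d - 1) * δ * X < 1 := by
    rw [sum_range_sum_range_choose] at hδstar
    calc (2 ^ d - 1) * δ * X = X * (2 ^ d - 1) * δ := by ring
      _ < 1 := (lt_inv_mul_iff₀ (mul_pos (by linarith) h2d)).1 (by simpa using hδstar)
  have hb : 0 < Δ + 1 := by linarith
  have hc : 0 < (2 ^ d - 1) * δ := by positivity
  exact ⟨(le_mul_of_one_le_right hc.le hX).trans hcX.le, by positivity,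
    mul_mul_rpow_lt_one (by linarith) hb hc hκ1 hd hcX⟩

theorem pow_apply_eq_zero_of_strictLower {S : Type*} [Semiring S] {d : ℕ}
    {A : Matrix (Fin d) (Fin d) S} (hA : ∀ i j : Fin d, (i : ℕ) ≤ j → A i j = 0) (m : ℕ) :
    ∀ i j : Fin d, (i : ℕ) < j + m → (A ^ m) i j = 0 := by
  induction m with
  | zero => exact fun i j hij => Matrix.one_apply_ne (fun h => by simp [h] at hij)
  | succ m ih =>
    intro i j hij
    rw [pow_succ', Matrix.mul_apply]
    refine sum_eq_zero fun l _ => ?_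
    by_cases hil : (i : ℕ) ≤ l
    · rw [hA i l hil, zero_mul]
    · rw [ih l j (by omega), mul_zero]

theorem pow_dim_eq_zero_of_strictLower {S : Type*} [Semiring S] {d : ℕ}
    {A : Matrix (Fin d) (Fin d) S} (hA : ∀ i j : Fin d, (i : ℕ) ≤ j → A i j = 0) : A ^ d = 0 := by
  ext i j
  exact pow_apply_eq_zero_of_strictLower hA d i j (by omega)

section ColSumNorm

attribute [local instance] Matrix.linftyOpNormedRing

variable {d : ℕ}

/-- `‖A‖₁` is the `ℓ∞` operator norm of `Aᵀ`, so the ring isomorphism `A ↦ op Aᵀ` onto the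
opposite ring turns `colSumNorm` into a submultiplicative ring norm. -/
theorem colSumNorm_eq_norm_transposeRingEquiv (A : Matrix (Fin d) (Fin d) ℝ) :
    colSumNorm A = ‖Matrix.transposeRingEquiv (Fin d) ℝ A‖ := by
  rw [Matrix.transposeRingEquiv_apply, MulOpposite.norm_op, Matrix.linfty_opNorm_def]
  simp [colSumNorm, Finset.sup_univ_eq_ciSup, NNReal.coe_iSup]

theorem colSumNorm_le {A : Matrix (Fin d) (Fin d) ℝ} {c : ℝ} (hc : 0 ≤ c)
    (h : ∀ k, ∑ j, |A j k| ≤ c) : colSumNorm A ≤ c :=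
  Real.iSup_le h hc

theorem colSumNorm_smul (z : ℝ) (A : Matrix (Fin d) (Fin d) ℝ) :
    colSumNorm (z • A) = |z| * colSumNorm A := by
  simp [colSumNorm, abs_mul, ← mul_sum, Real.mul_iSup_of_nonneg (abs_nonneg z)]

theorem sum_abs_ite_val_eq_le_one (k : ℕ) :
    ∑ j : Fin d, |if (j : ℕ) = k then (1 : ℝ) else 0| ≤ 1 := by
  simp only [apply_ite, abs_one, abs_zero, sum_boole]
  exact_mod_cast card_le_one.2 fun a ha b hb => Fin.ext (by simp_all)

def firstRowOnes (d : ℕ) : Matrix (Fin d) (Fin d) ℝ :=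
  fun i _ => if (i : ℕ) = 0 then 1 else 0

def subdiagOnes (d : ℕ) : Matrix (Fin d) (Fin d) ℝ :=
  fun i j => if (i : ℕ) = j + 1 then 1 else 0

theorem companionMat_eq_smul_add (z : ℝ) :
    companionMat d z = z • firstRowOnes d + subdiagOnes d := by
  ext i j
  simp only [companionMat, firstRowOnes, subdiagOnes, Matrix.add_apply, Matrix.smul_apply,
    smul_eq_mul]
  split_ifs <;> first | (exfalso; omega) | ring

theorem colSumNorm_firstRowOnes_le : colSumNorm (firstRowOnes d) ≤ 1 :=
  colSumNorm_le zero_le_one fun _ => sum_abs_ite_val_eq_le_one 0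

theorem colSumNorm_subdiagOnes_le : colSumNorm (subdiagOnes d) ≤ 1 :=
  colSumNorm_le zero_le_one fun k => sum_abs_ite_val_eq_le_one (k + 1)

theorem subdiagOnes_pow_dim : subdiagOnes d ^ d = 0 :=
  pow_dim_eq_zero_of_strictLower fun i j hij => if_neg (by omega)

theorem colSumNorm_companionMat_le {z : ℝ} (hz : 0 ≤ z) :
    colSumNorm (companionMat d z) ≤ z + 1 := by
  rw [companionMat_eq_smul_add, colSumNorm_eq_norm_transposeRingEquiv, map_add]
  refine (norm_add_le _ _).trans (add_le_add ?_ ?_) <;>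
    rw [← colSumNorm_eq_norm_transposeRingEquiv]
  · rw [colSumNorm_smul, abs_of_nonneg hz]
    exact mul_le_of_le_one_right hz colSumNorm_firstRowOnes_le
  · exact colSumNorm_subdiagOnes_le

theorem colSumNorm_companionMat_pow_dim_le [NeZero d] {δ : ℝ} (hδ0 : 0 ≤ δ) (hδ1 : δ ≤ 1) :
    colSumNorm (companionMat d δ ^ d) ≤ (2 ^ d - 1) * δ := by
  set T := Matrix.transposeRingEquiv (Fin d) ℝ
  have hF : ‖T (δ • firstRowOnes d)‖ ≤ δ := by
    rw [← colSumNorm_eq_norm_transposeRingEquiv, colSumNorm_smul, abs_of_nonneg hδ0]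
    exact mul_le_of_le_one_right hδ0 colSumNorm_firstRowOnes_le
  have hN : ‖T (subdiagOnes d)‖ ≤ 1 := by
    rw [← colSumNorm_eq_norm_transposeRingEquiv]; exact colSumNorm_subdiagOnes_le
  calc colSumNorm (companionMat d δ ^ d)
      = ‖(T (δ • firstRowOnes d) + T (subdiagOnes d)) ^ d - T (subdiagOnes d) ^ d‖ := by
        rw [colSumNorm_eq_norm_transposeRingEquiv, ← map_pow T, subdiagOnes_pow_dim, map_zero,
          sub_zero, ← map_add, ← companionMat_eq_smul_add, map_pow]
    _ ≤ (δ + 1) ^ d - 1 ^ d := norm_add_pow_sub_pow_le hF hN d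
    _ ≤ (2 ^ d - 1) * δ := by rw [one_pow]; exact add_one_pow_sub_one_le hδ0 hδ1 d

theorem colSumNorm_windowProd_companionMat_le [NeZero d] {δ Δ κ : ℝ} (hδ : 0 < δ)
    (hc1 : (2 ^ d - 1) * δ ≤ 1) {z : ℕ → ℝ} (hz : ∀ k, 0 ≤ z k ∧ z k ≤ Δ)
    {J : ℕ → Prop} [DecidablePred J] (hJ : ∀ k, ¬ J k → ∀ i < d, z (k + i) = δ) {j n : ℕ}
    (hcount : ((∑ i ∈ range (n + 1), if J (j + i) then 1 else 0 : ℕ) : ℝ) ≤ κ * n) :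
    colSumNorm (windowProd (fun k => companionMat d (z k)) j (n + 1)) ≤
      (Δ + 1) ^ (d - 1) * ((2 ^ d - 1) * δ) ^ ((2 - d : ℝ) / d) *
        ((Δ + 1) ^ κ * ((2 ^ d - 1) * δ) ^ ((1 - κ) / d)) ^ n := by
  set c := (2 ^ d - 1) * δ
  set T := Matrix.transposeRingEquiv (Fin d) ℝ
  have hd : 0 < d := Nat.pos_of_ne_zero (NeZero.ne d)
  have h2d : (2 : ℝ) ≤ 2 ^ d := le_self_pow₀ one_le_two hd.ne'
  have hc0 : 0 < c := mul_pos (by linarith) hδ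
  have hb : 1 ≤ Δ + 1 := by linarith [(hz 0).1, (hz 0).2]
  have hfactor (k : ℕ) : ‖T (companionMat d (z k))‖ ≤ Δ + 1 := by
    rw [← colSumNorm_eq_norm_transposeRingEquiv]
    exact (colSumNorm_companionMat_le (hz k).1).trans (by linarith [(hz k).2])
  have hblock (k : ℕ) (hk : ¬ J k) : ‖windowProd (fun k => T (companionMat d (z k))) k d‖ ≤ c := by
    rw [windowProd_eq_pow _ fun i hi => by rw [hJ k hk i hi], ← map_pow,
      ← colSumNorm_eq_norm_transposeRingEquiv]
    exact colSumNorm_companionMat_pow_dim_le hδ.le (by nlinarith)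
  obtain ⟨g, h, hlen, hh, hnorm⟩ :=
    norm_windowProd_le_of_blocks hd hb hc0.le hfactor hblock (n + 1) j
  calc colSumNorm (windowProd (fun k => companionMat d (z k)) j (n + 1))
      = ‖windowProd (fun k => T (companionMat d (z k))) j (n + 1)‖ := by
        rw [colSumNorm_eq_norm_transposeRingEquiv, map_windowProd]
    _ ≤ (Δ + 1) ^ (d - 1) * (c ^ g * (Δ + 1) ^ h) := by linarith
    _ ≤ (Δ + 1) ^ (d - 1) * (c ^ ((2 - d : ℝ) / d) * ((Δ + 1) ^ κ * c ^ ((1 - κ) / d)) ^ n) :=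
        mul_le_mul_of_nonneg_left (pow_mul_pow_le_of_length hb hc0 (by linarith) hd hlen
          ((Nat.cast_le.2 hh).trans hcount)) (by positivity)
    _ = _ := by ring

theorem colSumNorm_DmatProd_le [NeZero d] {Ω : Type*} (ε : ℤ → Ω → ℝ) (ω : Ω) {Δ δ K₂ κ : ℝ}
    (hδ : 0 < δ) (hδΔ : δ ≤ Δ) (hc1 : (2 ^ d - 1) * δ ≤ 1) (t : ℤ) {n : ℕ}
    (hcount : ∑ k ∈ range (n + 1),
      (if ∃ l : Fin d, |ε (t - k - l - 1) ω| ≤ K₂ then (1 : ℝ) else 0) ≤ κ * n) :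
    colSumNorm (DmatProd d Δ δ K₂ ε t n ω) ≤ (∏ k ∈ range (n + 1), (1 + |ε (t - k) ω|)) *
      ((Δ + 1) ^ (d - 1) * ((2 ^ d - 1) * δ) ^ ((2 - d : ℝ) / d) *
        ((Δ + 1) ^ κ * ((2 ^ d - 1) * δ) ^ ((1 - κ) / d)) ^ n) := by
  have hprod : DmatProd d Δ δ K₂ ε t n ω = windowProd (fun k => (1 + |ε (t - k) ω|) •
      companionMat d (if ∀ l : Fin d, |ε (t - k - 1 - l) ω| ≤ K₂ then Δ else δ)) 0 (n + 1) := by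
    simp [DmatProd, windowProd, Dmat, ← List.flatMap_pure_eq_map, Function.comp_def,
      List.flatMap_assoc]
  rw [hprod, windowProd_smul, colSumNorm_smul, abs_of_nonneg (by positivity)]
  simp only [zero_add]
  refine mul_le_mul_of_nonneg_left (colSumNorm_windowProd_companionMat_le hδ hc1
    (J := fun k => ∃ l : Fin d, |ε (t - k - l - 1) ω| ≤ K₂) (fun k => ?_) (fun k hk i hi => ?_)
    ?_) (by positivity)
  · split_ifs <;> constructor <;> linarith
  · rw [if_neg]
    push Not at hk ⊢
    exact ⟨⟨0, by omega⟩, by simpa [sub_sub, add_comm] using hk ⟨i, hi⟩⟩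
  · push_cast; simpa using hcount

end ColSumNorm

section Moments

variable {Ω : Type*} [MeasurableSpace Ω] {P : Measure Ω} [IsProbabilityMeasure P]

theorem lintegral_ofReal_one_add_abs_eq {X Y : Ω → ℝ} (hX : Measurable X) (hY : Measurable Y)
    (hXY : P.map X = P.map Y) (hYint : Integrable (fun ω => |Y ω|) P) :
    ∫⁻ ω, ENNReal.ofReal (1 + |X ω|) ∂P = ENNReal.ofReal (1 + ∫ ω, |Y ω| ∂P) := by
  have hg : Measurable fun x : ℝ => ENNReal.ofReal (1 + |x|) := by fun_prop
  have hint : Integrable (fun ω => 1 + |Y ω|) P := (integrable_const 1).add hYint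
  rw [← lintegral_map hg hX, hXY, lintegral_map hg hY,
    ← ofReal_integral_eq_lintegral_ofReal hint (ae_of_all _ fun _ => by positivity),
    integral_add (integrable_const 1) hYint, integral_const]
  simp

theorem lintegral_prod_ofReal_one_add_abs {ι : Type*} {X : ι → Ω → ℝ} {Y : Ω → ℝ}
    (hX : ∀ i, Measurable (X i)) (hY : Measurable Y) (hindep : iIndepFun X P)
    (hident : ∀ i, P.map (X i) = P.map Y) (hYint : Integrable (fun ω => |Y ω|) P)
    (s : Finset ι) :
    ∫⁻ ω, ∏ i ∈ s, ENNReal.ofReal (1 + |X i ω|) ∂P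
      = ENNReal.ofReal (1 + ∫ ω, |Y ω| ∂P) ^ s.card := by
  have hg : Measurable fun x : ℝ => ENNReal.ofReal (1 + |x|) := by fun_prop
  rw [lintegral_prod_eq_prod_lintegral_of_indepFun s (fun i ω => ENNReal.ofReal (1 + |X i ω|))
      (hindep.comp _ fun _ => hg) fun i => hg.comp (hX i)]
  simp only [lintegral_ofReal_one_add_abs_eq (hX _) hY (hident _) hYint, prod_const]

theorem setLIntegral_ofReal_prod_one_add_abs_mul_le {ι : Type*} {X : ι → Ω → ℝ} {Y : Ω → ℝ}
    (hX : ∀ i, Measurable (X i)) (hY : Measurable Y) (hindep : iIndepFun X P)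
    (hident : ∀ i, P.map (X i) = P.map Y) (hYint : Integrable (fun ω => |Y ω|) P)
    (s : Finset ι) (S : Set Ω) (K : ℝ) :
    ∫⁻ ω in S, ENNReal.ofReal ((∏ i ∈ s, (1 + |X i ω|)) * K) ∂P
      ≤ ENNReal.ofReal ((1 + ∫ ω, |Y ω| ∂P) ^ s.card * K) := by
  have hA : 0 ≤ 1 + ∫ ω, |Y ω| ∂P := by positivity
  calc _ ≤ ∫⁻ ω, (∏ i ∈ s, ENNReal.ofReal (1 + |X i ω|)) * ENNReal.ofReal K ∂P := by
        refine (setLIntegral_le_lintegral _ _).trans_eq (lintegral_congr fun ω => ?_)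
        rw [ENNReal.ofReal_mul (by positivity),
          ENNReal.ofReal_prod_of_nonneg fun _ _ => by positivity]
    _ = _ := by
        rw [lintegral_mul_const' _ _ ENNReal.ofReal_ne_top,
          lintegral_prod_ofReal_one_add_abs hX hY hindep hident hYint,
          ← ENNReal.ofReal_pow hA, ← ENNReal.ofReal_mul (by positivity)]

end Moments

theorem matrix_product_bad_part_contracts_general
    {Ω : Type*} [MeasurableSpace Ω] (P : Measure Ω) [IsProbabilityMeasure P]
    (ε : ℤ → Ω → ℝ) (hεmeas : ∀ i, Measurable (ε i))
    (hεindep : iIndepFun ε P)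
    (hεident : ∀ i j : ℤ, Measure.map (ε i) P = Measure.map (ε j) P)
    (d : ℕ) (hd : 1 ≤ d) (Δ δ K₂ : ℝ) (hδpos : 0 < δ) (hδΔ : δ ≤ Δ)
    (hmom : Integrable (fun ω => |ε 0 ω|) P)
    (κ : ℝ) (hκ : κ ∈ Set.Ioo (0:ℝ) 1)
    (hδstar : δ < ((1 + ∫ ω, |ε 0 ω| ∂P) ^ ((d : ℝ) / (1 - κ))
        * (Δ + 1) ^ (κ * d / (1 - κ))
        * (∑ l ∈ range d, ∑ k ∈ range (l + 1), (l.choose k : ℝ)))⁻¹) :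
    ∃ C : ℝ, ∃ γ ∈ Set.Ioo (0:ℝ) 1, ∀ (t : ℤ) (n : ℕ),
      ∫⁻ ω in {ω : Ω | ¬ (κ * n < ∑ k ∈ range (n + 1),
          (if ∃ l : Fin d, |ε (t - (k : ℤ) - (l : ℤ) - 1) ω| ≤ K₂ then (1:ℝ) else 0))},
        ENNReal.ofReal (colSumNorm (DmatProd d Δ δ K₂ ε t n ω)) ∂P
        ≤ ENNReal.ofReal (C * γ ^ n) := by
  have : NeZero d := ⟨by omega⟩
  set A := 1 + ∫ ω, |ε 0 ω| ∂P
  set c := (2 ^ d - 1) * δ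
  have hA : 1 ≤ A := le_add_of_nonneg_right (integral_nonneg fun _ => abs_nonneg _)
  obtain ⟨hc1, hγ⟩ := bounds_of_deltaStar (by omega) hA hδpos hδΔ hκ hδstar
  refine ⟨A * ((Δ + 1) ^ (d - 1) * c ^ ((2 - d : ℝ) / d)), A * ((Δ + 1) ^ κ * c ^ ((1 - κ) / d)),
    hγ, fun t n => ?_⟩
  set K := (Δ + 1) ^ (d - 1) * c ^ ((2 - d : ℝ) / d) * ((Δ + 1) ^ κ * c ^ ((1 - κ) / d)) ^ n
    with hK_def
  calc _ ≤ ∫⁻ ω in _, ENNReal.ofReal ((∏ k ∈ range (n + 1), (1 + |ε (t - k) ω|)) * K) ∂P :=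
        setLIntegral_mono (by fun_prop) fun ω hω => ENNReal.ofReal_le_ofReal
          (colSumNorm_DmatProd_le ε ω hδpos hδΔ hc1 t (not_lt.1 hω))
    _ ≤ ENNReal.ofReal (A ^ (n + 1) * K) := by
        simpa using setLIntegral_ofReal_prod_one_add_abs_mul_le (fun _ => hεmeas _) (hεmeas 0)
          (hεindep.precomp fun a b h => by simpa using h) (fun _ => hεident _ 0) hmom
          (range (n + 1)) _ K
    _ = _ := by rw [hK_def]; ring_nf

/-- with `B_n = ‖D̃_t ⋯ D̃_{t−n}‖₁`, `J_k = 1{min_{l=1,…,d}|ε_{t−k−l}| ≤ K₂}`,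
`I_n = 1{Σ_{k=0}^n J_k > κn}` and `B_{n,2} = (1 − I_n) B_n`, if `E|ε₀| < ∞` and condition
(δ*) holds for some `κ ∈ (0,1)`, then `E[B_{n,2}] ≤ C γ^n` for constants `C < ∞`,
`γ ∈ (0,1)` and all `n ≥ 0`. -/
theorem matrix_product_bad_part_contracts
    {Ω : Type*} [MeasurableSpace Ω] (P : Measure Ω) [IsProbabilityMeasure P]
    (ε : ℤ → Ω → ℝ) (hεmeas : ∀ i, Measurable (ε i))
    (hεindep : iIndepFun ε P)
    (hεident : ∀ i j : ℤ, Measure.map (ε i) P = Measure.map (ε j) P)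
    (d : ℕ) (hd : 1 ≤ d) (Δ δ K₂ : ℝ) (hδpos : 0 < δ) (hδΔ : δ ≤ Δ) (hK₂ : 0 < K₂)
    (hmom : Integrable (fun ω => |ε 0 ω|) P)
    (κ : ℝ) (hκ : κ ∈ Set.Ioo (0:ℝ) 1)
    (hδstar : δ < ((1 + ∫ ω, |ε 0 ω| ∂P) ^ ((d : ℝ) / (1 - κ))
        * (Δ + 1) ^ (κ * d / (1 - κ))
        * (∑ l ∈ range d, ∑ k ∈ range (l + 1), (l.choose k : ℝ)))⁻¹) :
    ∃ C : ℝ, ∃ γ ∈ Set.Ioo (0:ℝ) 1, ∀ (t : ℤ) (n : ℕ),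
      ∫⁻ ω in {ω : Ω | ¬ (κ * n < ∑ k ∈ range (n + 1),
          (if ∃ l : Fin d, |ε (t - (k : ℤ) - (l : ℤ) - 1) ω| ≤ K₂ then (1:ℝ) else 0))},
        ENNReal.ofReal (colSumNorm (DmatProd d Δ δ K₂ ε t n ω)) ∂P
        ≤ ENNReal.ofReal (C * γ ^ n) :=
  matrix_product_bad_part_contracts_general P ε hεmeas hεindep hεident d hd Δ δ K₂ hδpos hδΔ hmom κ
    hκ hδstar
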